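/- Let G be a bipartite graph with a perfect matching of size n, and let H be a left k-copy of G. For 1 ≤ t ≤ n, let x_t be the probability over a uniformly random ranking σ of V that the bidder ranked t is matched by Ranking on H. Then 1 − x_t ≤ (1/(kn)) · Σ_{s=1}^{t} x_s. -/

import Mathlib

/-- One pass of the Ranking algorithm: process the keywords in the given arrival list,
matching each arriving keyword to its unmatched neighbor `v` minimizing `σ v` (bidders
are elements of `Fin p`, and `σ.symm r` is the bidder of rank `r`). -/
def rankingAux {α : Type*} {p : ℕ} (E : α → Fin p → Bool) (σ : Equiv.Perm (Fin p)) :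
    List α → Finset (Fin p) → List (α × Fin p)
  | [], _ => []
  | u :: rest, matched =>
    let cand : Finset (Fin p) :=
      Finset.univ.filter fun r => E u (σ.symm r) = true ∧ σ.symm r ∉ matched
    if h : cand.Nonempty then
      (u, σ.symm (cand.min' h)) ::
        rankingAux E σ rest (insert (σ.symm (cand.min' h)) matched)
    else rankingAux E σ rest matched

/-- The matching produced by Ranking on the bipartite graph `E` when keywords arrive
in the order given by `π` (the keyword arriving at time `t` is `π.symm t`) and bidders
are ranked by `σ`. -/
def ranking {n p : ℕ} (E : Fin n → Fin p → Bool) (π : Equiv.Perm (Fin n))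
    (σ : Equiv.Perm (Fin p)) : List (Fin n × Fin p) :=
  rankingAux E σ ((List.finRange n).map π.symm) ∅

-- The probability, over a uniformly random ranking `σ` of the bidders, that the
-- bidder of rank `t` is matched by Ranking (fixed arrival order `π`).
open scoped Classical in
noncomputable def rankProb {nH nV : ℕ} (E : Fin nH → Fin nV → Bool)
    (π : Equiv.Perm (Fin nH)) (t : Fin nV) : ℝ :=
  ((Finset.univ.filter fun σ : Equiv.Perm (Fin nV) =>
      σ.symm t ∈ (ranking E π σ).map Prod.snd).card : ℝ) /
    (Fintype.card (Equiv.Perm (Fin nV)))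

/-! Fix a ranking `σ` under which the bidder `v` of rank `t` stays unmatched, and move `v` to any
rank `i`, keeping the relative order of the other bidders. Since `v` was unmatched, blocking it
does not change the run; the move does not change the run with `v` blocked; and unblocking `v`
can only improve every keyword's partner. Every keyword adjacent to `v`, in particular each of
the `k` copies of the partner of `v` in the perfect matching, is therefore matched to a bidder of
rank at most `t` after the move. For a fixed ranking `σ'` the pairs (rank `i`, copy) arising in
this way are matched to distinct bidders, so summing over `σ'` gives
`k n Pr[rank t unmatched] ≤ ∑_{s ≤ t} x_s`. -/

open Finset

namespace Ranking

section RankingAux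

variable {α : Type*} {p : ℕ} {E : α → Fin p → Bool} {σ τ : Equiv.Perm (Fin p)}
  {u : α} {v w : Fin p} {M : Finset (Fin p)}

def candidates (E : α → Fin p → Bool) (u : α) (M : Finset (Fin p)) : Finset (Fin p) :=
  {w | E u w = true ∧ w ∉ M}

@[simp]
lemma mem_candidates : w ∈ candidates E u M ↔ E u w = true ∧ w ∉ M := by
  simp [candidates]

lemma candidates_insert_subset : candidates E u (insert v M) ⊆ candidates E u M := fun w hw => by
  simp only [mem_candidates, mem_insert, not_or] at hw ⊢
  exact ⟨hw.1, hw.2.2⟩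

def pick (σ : Equiv.Perm (Fin p)) (h : (candidates E u M).Nonempty) : Fin p :=
  σ.symm (((candidates E u M).image σ).min' (h.image σ))

lemma rankingAux_cons (L : List α) :
    rankingAux E σ (u :: L) M =
      if h : (candidates E u M).Nonempty then
        (u, pick σ h) :: rankingAux E σ L (insert (pick σ h) M)
      else rankingAux E σ L M := by
  have hcand : (univ.filter fun r => E u (σ.symm r) = true ∧ σ.symm r ∉ M) =
      (candidates E u M).image σ := by
    ext r
    simp [← Equiv.eq_symm_apply]
  simp only [rankingAux, hcand, image_nonempty]
  rfl

lemma pick_mem (σ : Equiv.Perm (Fin p)) (h : (candidates E u M).Nonempty) :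
    pick σ h ∈ candidates E u M := by
  obtain ⟨w, hw, hσw⟩ := mem_image.1 (min'_mem _ (h.image σ))
  rw [pick, ← hσw, Equiv.symm_apply_apply]
  exact hw

lemma pick_le (σ : Equiv.Perm (Fin p)) (h : (candidates E u M).Nonempty)
    (hw : w ∈ candidates E u M) : σ (pick σ h) ≤ σ w := by
  rw [pick, Equiv.apply_symm_apply]
  exact min'_le _ _ (mem_image_of_mem σ hw)

lemma pick_eq_of_le (h : (candidates E u M).Nonempty) (hw : w ∈ candidates E u M)
    (hmin : ∀ w' ∈ candidates E u M, σ w ≤ σ w') : pick σ h = w :=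
  σ.injective ((pick_le σ h hw).antisymm (hmin _ (pick_mem σ h)))

lemma pick_mem_candidates_insert (h : (candidates E u M).Nonempty) (hv : pick σ h ≠ v) :
    pick σ h ∈ candidates E u (insert v M) := by
  have := mem_candidates.1 (pick_mem σ h)
  simp [this.1, this.2, hv]

lemma pick_insert_eq (h : (candidates E u M).Nonempty)
    (h' : (candidates E u (insert v M)).Nonempty) (hv : pick σ h ≠ v) : pick σ h' = pick σ h :=
  pick_eq_of_le h' (pick_mem_candidates_insert h hv) fun _ hw =>
    pick_le σ h (candidates_insert_subset hw)

lemma snd_notMem_of_mem_rankingAux {L : List α} {q : α × Fin p}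
    (hq : q ∈ rankingAux E σ L M) : q.2 ∉ M := by
  induction L generalizing M with
  | nil => simp [rankingAux] at hq
  | cons u L ih =>
    rw [rankingAux_cons] at hq
    split_ifs at hq with h
    · rcases List.mem_cons.1 hq with rfl | hq
      · exact (mem_candidates.1 (pick_mem σ h)).2
      · exact fun hM => ih hq (mem_insert_of_mem hM)
    · exact ih hq

lemma nodup_map_snd_rankingAux (L : List α) (M : Finset (Fin p)) :
    ((rankingAux E σ L M).map Prod.snd).Nodup := by
  induction L generalizing M with
  | nil => simp [rankingAux]
  | cons u L ih =>
    rw [rankingAux_cons]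
    split_ifs with h
    · refine List.nodup_cons.2 ⟨fun hmem => ?_, ih _⟩
      obtain ⟨q, hq, hq2⟩ := List.mem_map.1 hmem
      exact snd_notMem_of_mem_rankingAux hq (hq2 ▸ mem_insert_self _ _)
    · exact ih M

lemma exists_mem_rankingAux_lt_of_adj {L : List α} (hu : u ∈ L) (huv : E u v = true)
    (hvM : v ∉ M) (hv : v ∉ (rankingAux E σ L M).map Prod.snd) :
    ∃ w, (u, w) ∈ rankingAux E σ L M ∧ σ w < σ v := by
  induction L generalizing M with
  | nil => simp at hu
  | cons u₀ L ih =>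
    have hvc : v ∈ candidates E u M := mem_candidates.2 ⟨huv, hvM⟩
    rw [rankingAux_cons] at hv ⊢
    split_ifs at hv ⊢ with h
    · simp only [List.map_cons, List.mem_cons, not_or] at hv
      by_cases hu₀ : u = u₀
      · subst hu₀
        exact ⟨_, List.mem_cons_self,
          (pick_le σ h hvc).lt_of_ne (σ.injective.ne (Ne.symm hv.1))⟩
      · obtain ⟨w, hw, hlt⟩ :=
          ih (List.mem_of_ne_of_mem hu₀ hu) (by simp [hvM, hv.1]) hv.2
        exact ⟨w, List.mem_cons_of_mem _ hw, hlt⟩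
    · have hu₀ : u ≠ u₀ := by rintro rfl; exact h ⟨v, hvc⟩
      exact ih (List.mem_of_ne_of_mem hu₀ hu) hvM hv

lemma rankingAux_insert_of_notMem {L : List α} (hvM : v ∉ M)
    (hv : v ∉ (rankingAux E σ L M).map Prod.snd) :
    rankingAux E σ L (insert v M) = rankingAux E σ L M := by
  induction L generalizing M with
  | nil => simp [rankingAux]
  | cons u L ih =>
    rw [rankingAux_cons] at hv
    rw [rankingAux_cons, rankingAux_cons]
    by_cases h : (candidates E u M).Nonempty
    · rw [dif_pos h] at hv
      simp only [List.map_cons, List.mem_cons, not_or] at hv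
      have h' : (candidates E u (insert v M)).Nonempty :=
        ⟨_, pick_mem_candidates_insert h (Ne.symm hv.1)⟩
      rw [dif_pos h', dif_pos h, pick_insert_eq h h' (Ne.symm hv.1), insert_comm,
        ih (by simp [hvM, hv.1]) hv.2]
    · rw [dif_neg h] at hv
      rw [dif_neg h, dif_neg fun h' => h (h'.mono candidates_insert_subset), ih hvM hv]

lemma rankingAux_congr_of_lt_iff {L : List α}
    (hστ : ∀ w ∉ M, ∀ w' ∉ M, (σ w < σ w' ↔ τ w < τ w')) :
    rankingAux E σ L M = rankingAux E τ L M := by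
  induction L generalizing M with
  | nil => simp [rankingAux]
  | cons u L ih =>
    rw [rankingAux_cons, rankingAux_cons]
    split_ifs with h
    · have hpick : pick τ h = pick σ h := by
        refine pick_eq_of_le h (pick_mem σ h) fun w hw => not_lt.1 fun hlt => ?_
        rw [← hστ _ (mem_candidates.1 hw).2 _ (mem_candidates.1 (pick_mem σ h)).2] at hlt
        exact (pick_le σ h hw).not_gt hlt
      rw [hpick, ih fun w hw w' hw' =>
        hστ w (fun hM => hw (mem_insert_of_mem hM)) w' (fun hM => hw' (mem_insert_of_mem hM))]
    · exact ih hστ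

lemma exists_mem_rankingAux_le_of_mem_insert {L : List α} (hvM : v ∉ M)
    (huw : (u, w) ∈ rankingAux E σ L (insert v M)) :
    ∃ w', (u, w') ∈ rankingAux E σ L M ∧ σ w' ≤ σ w := by
  induction L generalizing M v with
  | nil => simp [rankingAux] at huw
  | cons u₀ L ih =>
    rw [rankingAux_cons] at huw ⊢
    by_cases h' : (candidates E u₀ (insert v M)).Nonempty
    · have h : (candidates E u₀ M).Nonempty := h'.mono candidates_insert_subset
      rw [dif_pos h'] at huw
      rw [dif_pos h]
      rcases List.mem_cons.1 huw with huw | huw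
      · obtain ⟨rfl, rfl⟩ := Prod.mk.inj huw
        exact ⟨_, List.mem_cons_self, pick_le σ h (candidates_insert_subset (pick_mem σ h'))⟩
      by_cases hv : pick σ h = v
      · have hM : pick σ h' ∉ insert v M := (mem_candidates.1 (pick_mem σ h')).2
        obtain ⟨w', hw', hle⟩ := ih hM huw
        exact ⟨w', List.mem_cons_of_mem _ (hv ▸ hw'), hle⟩
      · rw [insert_comm, pick_insert_eq h h' hv] at huw
        obtain ⟨w', hw', hle⟩ := ih (by simp [hvM, Ne.symm hv]) huw
        exact ⟨w', List.mem_cons_of_mem _ hw', hle⟩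
    · rw [dif_neg h'] at huw
      split_ifs with h
      · have hv : pick σ h = v := by
          by_contra hv
          exact h' ⟨_, pick_mem_candidates_insert h hv⟩
        exact ⟨w, List.mem_cons_of_mem _ (hv ▸ huw), le_rfl⟩
      · exact ih hvM huw

lemma exists_mem_rankingAux_le_of_lt_iff {L : List α} (hvM : v ∉ M)
    (hv : v ∉ (rankingAux E σ L M).map Prod.snd)
    (hστ : ∀ w ≠ v, ∀ w' ≠ v, (σ w < σ w' ↔ τ w < τ w'))
    (huw : (u, w) ∈ rankingAux E σ L M) :
    ∃ w', (u, w') ∈ rankingAux E τ L M ∧ τ w' ≤ τ w := by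
  rw [← rankingAux_insert_of_notMem hvM hv, rankingAux_congr_of_lt_iff (τ := τ)
    fun w hw w' hw' => hστ w (ne_of_mem_of_not_mem (mem_insert_self v M) hw).symm w'
      (ne_of_mem_of_not_mem (mem_insert_self v M) hw').symm] at huw
  exact exists_mem_rankingAux_le_of_mem_insert hvM huw

end RankingAux

section MoveRank

variable {m : ℕ}

def moveRank (t i : Fin (m + 1)) : Equiv.Perm (Fin (m + 1)) :=
  (finSuccEquiv' t).trans (finSuccEquiv' i).symm

@[simp]
lemma moveRank_apply_self (t i : Fin (m + 1)) : moveRank t i t = i := by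
  simp [moveRank, finSuccEquiv'_at, finSuccEquiv'_symm_none]

@[simp]
lemma moveRank_apply_succAbove (t i : Fin (m + 1)) (j : Fin m) :
    moveRank t i (t.succAbove j) = i.succAbove j := by
  simp [moveRank, finSuccEquiv'_succAbove, finSuccEquiv'_symm_some]

lemma moveRank_lt_moveRank_iff {t i a b : Fin (m + 1)} (ha : a ≠ t) (hb : b ≠ t) :
    moveRank t i a < moveRank t i b ↔ a < b := by
  obtain ⟨a, rfl⟩ := Fin.exists_succAbove_eq ha
  obtain ⟨b, rfl⟩ := Fin.exists_succAbove_eq hb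
  simp [Fin.succAbove_lt_succAbove_iff]

lemma moveRank_le_of_lt {t i a : Fin (m + 1)} (ha : a < t) : moveRank t i a ≤ t := by
  obtain ⟨j, rfl⟩ := Fin.exists_succAbove_eq ha.ne
  rw [moveRank_apply_succAbove]
  refine le_trans ?_ ((Fin.succAbove_lt_iff_succ_le t j).1 ha)
  rcases Fin.castSucc_lt_or_lt_succ i j with h | h
  · rw [Fin.succAbove_of_castSucc_lt _ _ h]
    exact Fin.castSucc_lt_succ.le
  · rw [Fin.succAbove_of_lt_succ _ _ h]

end MoveRank

abbrev RankMatched {nH p : ℕ} (E : Fin nH → Fin p → Bool) (π : Equiv.Perm (Fin nH))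
    (σ : Equiv.Perm (Fin p)) (s : Fin p) : Prop :=
  σ.symm s ∈ (ranking E π σ).map Prod.snd

section RankProb

variable {nH p : ℕ} (E : Fin nH → Fin p → Bool) (π : Equiv.Perm (Fin nH)) (s : Fin p)

lemma rankProb_eq_card_div :
    rankProb E π s = #{σ | RankMatched E π σ s} / Fintype.card (Equiv.Perm (Fin p)) := by
  rw [rankProb]

lemma one_sub_rankProb_eq_card_div :
    1 - rankProb E π s = #{σ | ¬RankMatched E π σ s} / Fintype.card (Equiv.Perm (Fin p)) := by
  have hN : (Fintype.card (Equiv.Perm (Fin p)) : ℝ) ≠ 0 := by positivity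
  rw [rankProb_eq_card_div, eq_div_iff hN, sub_mul, div_mul_cancel₀ _ hN, one_mul,
    sub_eq_iff_eq_add', ← Nat.cast_add, card_filter_add_card_filter_not, card_univ]

end RankProb

lemma exists_mem_ranking_moveRank_le {nH m : ℕ} {E : Fin nH → Fin (m + 1) → Bool}
    {π : Equiv.Perm (Fin nH)} {σ : Equiv.Perm (Fin (m + 1))} {t : Fin (m + 1)}
    (ht : ¬RankMatched E π σ t) (i : Fin (m + 1)) {x : Fin nH} (hx : E x (σ.symm t) = true) :
    ∃ w, (x, w) ∈ ranking E π (moveRank t i * σ) ∧ (moveRank t i * σ) w ≤ t := by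
  have hx_mem : x ∈ (List.finRange nH).map π.symm :=
    List.mem_map.2 ⟨π x, List.mem_finRange _, π.symm_apply_apply x⟩
  obtain ⟨w, hw, hlt⟩ := exists_mem_rankingAux_lt_of_adj hx_mem hx (notMem_empty _) ht
  rw [Equiv.apply_symm_apply] at hlt
  have hord : ∀ a ≠ σ.symm t, ∀ b ≠ σ.symm t,
      (σ a < σ b ↔ (moveRank t i * σ) a < (moveRank t i * σ) b) := fun a ha b hb =>
    (moveRank_lt_moveRank_iff (fun h => ha (σ.eq_symm_apply.2 h))
      (fun h => hb (σ.eq_symm_apply.2 h))).symm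
  obtain ⟨w', hw', hle⟩ := exists_mem_rankingAux_le_of_lt_iff (notMem_empty _) ht hord hw
  exact ⟨w', hw', hle.trans (moveRank_le_of_lt hlt)⟩

section KCopy

variable {m nH k : ℕ} {EG : Fin (m + 1) → Fin (m + 1) → Bool} {f : Equiv.Perm (Fin (m + 1))}
  {ζ : Fin nH → Fin (m + 1)} {EH : Fin nH → Fin (m + 1) → Bool}

lemma mul_card_le_card_rankMatched (hf : ∀ v, EG (f v) v = true)
    (hζ : ∀ u, #{x | ζ x = u} = k) (hEH : ∀ x v, EH x v = EG (ζ x) v)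
    (π : Equiv.Perm (Fin nH)) (σ : Equiv.Perm (Fin (m + 1))) (t : Fin (m + 1)) :
    k * #{i | ¬RankMatched EH π ((moveRank t i)⁻¹ * σ) t} ≤
      #{s ∈ univ.filter (· ≤ t) | RankMatched EH π σ s} := by
  set I : Finset (Fin (m + 1)) := {i | ¬RankMatched EH π ((moveRank t i)⁻¹ * σ) t}
  have hcard : #(I.sigma fun i => {x | ζ x = f (σ.symm i)}) = k * #I := by
    rw [card_sigma, sum_congr rfl fun i _ => hζ _, sum_const, smul_eq_mul, mul_comm]
  rw [← hcard]
  refine card_le_card_of_forall_subsingleton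
    (fun q s => (q.2, σ.symm s) ∈ ranking EH π σ) ?_ ?_
  · rintro ⟨i, x⟩ hix
    simp only [I, mem_sigma, mem_filter, mem_univ, true_and] at hix
    have hv : ((moveRank t i)⁻¹ * σ).symm t = σ.symm i := by
      rw [Equiv.symm_apply_eq, Equiv.Perm.mul_apply, Equiv.apply_symm_apply,
        Equiv.Perm.eq_inv_iff_eq, moveRank_apply_self]
    have hx : EH x (((moveRank t i)⁻¹ * σ).symm t) = true := by
      rw [hv, hEH, hix.2]
      exact hf _
    obtain ⟨w, hw, hle⟩ := exists_mem_ranking_moveRank_le hix.1 i hx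
    rw [mul_inv_cancel_left] at hw hle
    refine ⟨σ w, mem_filter.2 ⟨mem_filter.2 ⟨mem_univ _, hle⟩, ?_⟩, by simpa using hw⟩
    simpa using ⟨x, hw⟩
  · intro s _ q₁ hq₁ q₂ hq₂
    simp only [Set.mem_ofPred_eq, mem_sigma, mem_filter, mem_univ, true_and] at hq₁ hq₂
    have hx : q₁.2 = q₂.2 := congrArg Prod.fst
      (List.inj_on_of_nodup_map (nodup_map_snd_rankingAux _ _) hq₁.2 hq₂.2 rfl)
    have hi : q₁.1 = q₂.1 :=
      σ.symm.injective (f.injective (hq₁.1.2.symm.trans (hx ▸ hq₂.1.2)))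
    exact Sigma.ext hi (heq_of_eq hx)

lemma mul_card_not_rankMatched_le_sum (hf : ∀ v, EG (f v) v = true)
    (hζ : ∀ u, #{x | ζ x = u} = k) (hEH : ∀ x v, EH x v = EG (ζ x) v)
    (π : Equiv.Perm (Fin nH)) (t : Fin (m + 1)) :
    k * (m + 1) * #{σ | ¬RankMatched EH π σ t} ≤
      ∑ s ∈ univ.filter (· ≤ t), #{σ | RankMatched EH π σ s} := by
  have hshift : ∀ i, #{σ | ¬RankMatched EH π ((moveRank t i)⁻¹ * σ) t} =
      #{σ | ¬RankMatched EH π σ t} := fun i =>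
    card_equiv (Equiv.mulLeft (moveRank t i)⁻¹) (by simp)
  calc k * (m + 1) * #{σ | ¬RankMatched EH π σ t}
      = k * ∑ i, #{σ | ¬RankMatched EH π ((moveRank t i)⁻¹ * σ) t} := by
        rw [sum_congr rfl fun i _ => hshift i, sum_const, card_univ, Fintype.card_fin,
          smul_eq_mul, mul_assoc]
    _ = k * ∑ σ, #{i | ¬RankMatched EH π ((moveRank t i)⁻¹ * σ) t} :=
        congrArg (k * ·) (sum_card_bipartiteAbove_eq_sum_card_bipartiteBelow _).symm
    _ ≤ ∑ σ, #{s ∈ univ.filter (· ≤ t) | RankMatched EH π σ s} := by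
        rw [mul_sum]
        exact sum_le_sum fun σ _ => mul_card_le_card_rankMatched hf hζ hEH π σ t
    _ = ∑ s ∈ univ.filter (· ≤ t), #{σ | RankMatched EH π σ s} :=
        sum_card_bipartiteAbove_eq_sum_card_bipartiteBelow _

end KCopy

end Ranking

theorem ranking_kcopy_rank_inequality_general (n k nH : ℕ) (hk : 1 ≤ k)
    (EG : Fin n → Fin n → Bool)
    (f : Equiv.Perm (Fin n)) (hf : ∀ v : Fin n, EG (f v) v = true)
    (ζ : Fin nH → Fin n)
    (hζ : ∀ u : Fin n, (Finset.univ.filter fun x => ζ x = u).card = k)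
    (EH : Fin nH → Fin n → Bool) (hEH : ∀ x v, EH x v = EG (ζ x) v)
    (π : Equiv.Perm (Fin nH)) (t : Fin n) :
    1 - rankProb EH π t ≤
      (1 / ((k : ℝ) * n)) * ∑ s ∈ Finset.univ.filter (· ≤ t), rankProb EH π s := by
  obtain ⟨m, rfl⟩ := Nat.exists_eq_add_one.2 t.pos
  have hcount := Ranking.mul_card_not_rankMatched_le_sum hf hζ hEH π t
  have hkn : (0 : ℝ) < k * (m + 1 : ℕ) := by positivity
  rw [Ranking.one_sub_rankProb_eq_card_div,
    sum_congr rfl fun s _ => Ranking.rankProb_eq_card_div EH π s, ← sum_div, ← mul_div_assoc,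
    div_le_div_iff_of_pos_right (by positivity), one_div, inv_mul_eq_div, le_div_iff₀ hkn]
  exact_mod_cast (mul_comm _ _).trans_le hcount

/-- let `G` be bipartite with a perfect matching of size `n` and let `H`
be a left `k`-copy of `G` (via `ζ`, exactly `k`-to-one, neighborhoods preserved).
With `x_t` the probability over a uniform random ranking `σ` that the bidder ranked
`t` is matched by Ranking on `H`, we have `1 − x_t ≤ (1/(kn)) ∑_{s ≤ t} x_s`. -/
theorem ranking_kcopy_rank_inequality (n k nH : ℕ) (hk : 1 ≤ k) (hn : 1 ≤ n)
    (EG : Fin n → Fin n → Bool)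
    (f : Equiv.Perm (Fin n)) (hf : ∀ v : Fin n, EG (f v) v = true)
    (ζ : Fin nH → Fin n)
    (hζ : ∀ u : Fin n, (Finset.univ.filter fun x => ζ x = u).card = k)
    (EH : Fin nH → Fin n → Bool) (hEH : ∀ x v, EH x v = EG (ζ x) v)
    (π : Equiv.Perm (Fin nH)) (t : Fin n) :
    1 - rankProb EH π t ≤
      (1 / ((k : ℝ) * n)) * ∑ s ∈ Finset.univ.filter (· ≤ t), rankProb EH π s :=
  ranking_kcopy_rank_inequality_general n k nH hk EG f hf ζ hζ EH hEH π t
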